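/- Nested forward invariance (strengthening of Proposition 1 stated in the paper). Suppose that (∂h_i/∂u)(x,u) = 0 for all (x,u) ∈ ℝ^n × ℝ^m and all i < r. Let α, γ > 0 and let ξ : [0,∞) → ℝ^n and υ : [0,∞) → ℝ^m be differentiable functions such that for all t ≥ 0: ξ'(t) = f(ξ(t),υ(t)), ⟨∇b(υ(t)), υ'(t)⟩ + α·b(υ(t)) ≥ 0, and (∂h_r/∂x)(ξ(t),υ(t))·f(ξ(t),υ(t)) + (∂h_r/∂u)(ξ(t),υ(t))·υ'(t) + γ·h_r(ξ(t),υ(t)) ≥ 0. Then for every k ∈ {0, 1, …, r}: if b(υ(0)) ≥ 0 and h_i(ξ(0),υ(0)) ≥ 0 for all i ∈ {k, …, r}, then b(υ(t)) ≥ 0 and h_i(ξ(t),υ(t)) ≥ 0 for all t ≥ 0 and all i ∈ {k, …, r}. -/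

import Mathlib

open Set Filter Topology
open scoped RealInnerProductSpace

noncomputable def hseq {n m : ℕ}
    (f : EuclideanSpace ℝ (Fin n) × EuclideanSpace ℝ (Fin m) → EuclideanSpace ℝ (Fin n))
    (h : EuclideanSpace ℝ (Fin n) → ℝ) (β : ℝ) :
    ℕ → EuclideanSpace ℝ (Fin n) × EuclideanSpace ℝ (Fin m) → ℝ
  | 0 => fun p => h p.1
  | i + 1 => fun p =>
      fderiv ℝ (fun x => hseq f h β i (x, p.2)) p.1 (f p) + β * hseq f h β i p

noncomputable def Xset {n m : ℕ}
    (f : EuclideanSpace ℝ (Fin n) × EuclideanSpace ℝ (Fin m) → EuclideanSpace ℝ (Fin n))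
    (h : EuclideanSpace ℝ (Fin n) → ℝ) (b : EuclideanSpace ℝ (Fin m) → ℝ) (β : ℝ) (i : ℕ) :
    Set (EuclideanSpace ℝ (Fin n) × EuclideanSpace ℝ (Fin m)) :=
  {p | 0 ≤ h p.1 ∧ 0 ≤ b p.2 ∧ 0 ≤ hseq f h β i p}

/-!
Every claimed inequality comes from a scalar differential inequality `g' + c g ≥ 0` along the
trajectory, which preserves `g ≥ 0` because `t ↦ exp (c t) g t` is then nondecreasing. For `b`
and `h_r` this inequality is a hypothesis. For `i < r`, `h_i` does not depend on `u`, so along the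
trajectory `h_i' = h_{i+1} - β h_i`; a descending induction from `i = r` therefore gives
`h_i' + β h_i ≥ 0` for each `i ≥ k` in turn.
-/

theorem nonneg_of_hasDerivWithinAt_add_mul_nonneg {g g' : ℝ → ℝ} {a c : ℝ}
    (hg : ∀ t ∈ Ici a, HasDerivWithinAt g (g' t) (Ici a) t)
    (hg' : ∀ t ∈ Ici a, 0 ≤ g' t + c * g t) (ha : 0 ≤ g a) :
    ∀ t ∈ Ici a, 0 ≤ g t := by
  have hG : ∀ t ∈ Ici a, HasDerivWithinAt (fun s => Real.exp (c * s) * g s)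
      (Real.exp (c * t) * (g' t + c * g t)) (Ici a) t := fun t ht => by
    refine ((((hasDerivAt_id t).const_mul c).exp.hasDerivWithinAt).mul (hg t ht)).congr_deriv ?_
    simp only [id_eq, mul_one]
    ring
  have hmono : MonotoneOn (fun s => Real.exp (c * s) * g s) (Ici a) := by
    refine monotoneOn_of_hasDerivWithinAt_nonneg (convex_Ici a)
      (f' := fun t => Real.exp (c * t) * (g' t + c * g t))
      (fun t ht => (hG t ht).continuousWithinAt) (fun t ht => ?_) (fun t ht => ?_)
    · rw [interior_Ici] at ht ⊢
      exact (hG t (Ioi_subset_Ici_self ht)).mono Ioi_subset_Ici_self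
    · rw [interior_Ici] at ht
      exact mul_nonneg (Real.exp_pos _).le (hg' t (Ioi_subset_Ici_self ht))
  intro t ht
  have h0 : 0 ≤ Real.exp (c * t) * g t :=
    (mul_nonneg (Real.exp_pos _).le ha).trans (hmono self_mem_Ici ht ht)
  exact (mul_nonneg_iff_of_pos_left (Real.exp_pos _)).mp h0

theorem nonneg_of_hasDerivWithinAt_eq_succ_sub_mul {g : ℕ → ℝ → ℝ} {a β : ℝ} {k r : ℕ}
    (hstep : ∀ i < r, ∀ t ∈ Ici a, HasDerivWithinAt (g i) (g (i + 1) t - β * g i t) (Ici a) t)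
    (htop : ∀ t ∈ Ici a, 0 ≤ g r t) (hinit : ∀ i, k ≤ i → i ≤ r → 0 ≤ g i a) :
    ∀ i, k ≤ i → i ≤ r → ∀ t ∈ Ici a, 0 ≤ g i t := by
  intro i hki hir
  revert hki
  induction hir using Nat.decreasingInduction with
  | self => exact fun _ => htop
  | of_succ j hj ih =>
    intro hkj
    refine nonneg_of_hasDerivWithinAt_add_mul_nonneg (c := β) (hstep j hj) (fun t ht => ?_)
      (hinit j hkj hj.le)
    linarith [ih (by omega) t ht]

theorem DifferentiableAt.hasDerivWithinAt_comp_prodMk {E F G : Type*}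
    [NormedAddCommGroup E] [NormedSpace ℝ E] [NormedAddCommGroup F] [NormedSpace ℝ F]
    [NormedAddCommGroup G] [NormedSpace ℝ G] {Φ : E × F → G} {ξ : ℝ → E} {υ : ℝ → F}
    {ξ' : E} {υ' : F} {s : Set ℝ} {t : ℝ} (hΦ : DifferentiableAt ℝ Φ (ξ t, υ t))
    (hξ : HasDerivWithinAt ξ ξ' s t) (hυ : HasDerivWithinAt υ υ' s t) :
    HasDerivWithinAt (fun τ => Φ (ξ τ, υ τ))
      (fderiv ℝ (fun x => Φ (x, υ t)) (ξ t) ξ' + fderiv ℝ (fun u => Φ (ξ t, u)) (υ t) υ') s t := by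
  have hx : fderiv ℝ (fun x => Φ (x, υ t)) (ξ t) = (fderiv ℝ Φ (ξ t, υ t)).comp (.inl ℝ E F) :=
    (hΦ.hasFDerivAt.comp (ξ t) (hasFDerivAt_prodMk_left (ξ t) (υ t))).fderiv
  have hu : fderiv ℝ (fun u => Φ (ξ t, u)) (υ t) = (fderiv ℝ Φ (ξ t, υ t)).comp (.inr ℝ E F) :=
    (hΦ.hasFDerivAt.comp (υ t) (hasFDerivAt_prodMk_right (ξ t) (υ t))).fderiv
  rw [hx, hu]
  refine (hΦ.hasFDerivAt.comp_hasDerivWithinAt t (hξ.prodMk hυ)).congr_deriv ?_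
  rw [ContinuousLinearMap.comp_apply, ContinuousLinearMap.comp_apply, ← map_add,
    ContinuousLinearMap.inl_apply, ContinuousLinearMap.inr_apply, Prod.mk_add_mk, add_zero,
    zero_add]

section hseq

variable {n m : ℕ}
  {f : EuclideanSpace ℝ (Fin n) × EuclideanSpace ℝ (Fin m) → EuclideanSpace ℝ (Fin n)}
  {h : EuclideanSpace ℝ (Fin n) → ℝ} {β : ℝ}

theorem contDiff_hseq {N : ℕ} (hh : ContDiff ℝ N h) (hf : ContDiff ℝ N f) {i k : ℕ}
    (hik : i + k ≤ N) : ContDiff ℝ k (hseq f h β i) := by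
  induction i generalizing k with
  | zero => exact (hh.of_le (by exact_mod_cast (by omega : k ≤ N))).comp contDiff_fst
  | succ i ih =>
    have hi : ContDiff ℝ (k + 1 : ℕ) (hseq f h β i) := ih (by omega)
    have hfderiv : ContDiff ℝ k (fun p : EuclideanSpace ℝ (Fin n) × EuclideanSpace ℝ (Fin m) =>
        fderiv ℝ (fun x => hseq f h β i (x, p.2)) p.1) :=
      (hi.comp (contDiff_snd.prodMk (contDiff_snd.comp contDiff_fst))).fderiv contDiff_fst
        (by push_cast; exact le_rfl)
    exact (hfderiv.clm_apply (hf.of_le (by exact_mod_cast (by omega : k ≤ N)))).add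
      (contDiff_const.mul (hi.of_le (by exact_mod_cast k.le_succ)))

theorem hasDerivWithinAt_hseq_comp_of_fderiv_snd_eq_zero {ξ : ℝ → EuclideanSpace ℝ (Fin n)}
    {υ : ℝ → EuclideanSpace ℝ (Fin m)} {υ' : EuclideanSpace ℝ (Fin m)} {s : Set ℝ} {t : ℝ}
    {i : ℕ} (hdiff : DifferentiableAt ℝ (hseq f h β i) (ξ t, υ t))
    (hu : fderiv ℝ (fun u => hseq f h β i (ξ t, u)) (υ t) = 0)
    (hξ : HasDerivWithinAt ξ (f (ξ t, υ t)) s t) (hυ : HasDerivWithinAt υ υ' s t) :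
    HasDerivWithinAt (fun τ => hseq f h β i (ξ τ, υ τ))
      (hseq f h β (i + 1) (ξ t, υ t) - β * hseq f h β i (ξ t, υ t)) s t := by
  refine (hdiff.hasDerivWithinAt_comp_prodMk hξ hυ).congr_deriv ?_
  simp only [hseq, hu, zero_apply]
  ring

end hseq

theorem nested_forward_invariance_general
    {n m r : ℕ}
    (f : EuclideanSpace ℝ (Fin n) × EuclideanSpace ℝ (Fin m) → EuclideanSpace ℝ (Fin n))
    (h : EuclideanSpace ℝ (Fin n) → ℝ) (b : EuclideanSpace ℝ (Fin m) → ℝ)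
    (hf : ContDiff ℝ (r + 1 : ℕ) f) (hh : ContDiff ℝ (r + 2 : ℕ) h) (hb : ContDiff ℝ 2 b)
    (β : ℝ)
    (hrel : ∀ (p : EuclideanSpace ℝ (Fin n) × EuclideanSpace ℝ (Fin m)), ∀ i < r,
      fderiv ℝ (fun u => hseq f h β i (p.1, u)) p.2 = 0)
    (α γ : ℝ)
    (ξ : ℝ → EuclideanSpace ℝ (Fin n)) (υ : ℝ → EuclideanSpace ℝ (Fin m))
    (hode : ∀ t ∈ Ici (0 : ℝ), ∃ v : EuclideanSpace ℝ (Fin m),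
      HasDerivWithinAt ξ (f (ξ t, υ t)) (Ici 0) t ∧
      HasDerivWithinAt υ v (Ici 0) t ∧
      0 ≤ ⟪gradient b (υ t), v⟫ + α * b (υ t) ∧
      0 ≤ fderiv ℝ (fun x => hseq f h β r (x, υ t)) (ξ t) (f (ξ t, υ t))
        + fderiv ℝ (fun u => hseq f h β r (ξ t, u)) (υ t) v + γ * hseq f h β r (ξ t, υ t)) :
    ∀ k ≤ r,
      (0 ≤ b (υ 0) ∧ ∀ i, k ≤ i → i ≤ r → 0 ≤ hseq f h β i (ξ 0, υ 0)) →
      ∀ t ∈ Ici (0 : ℝ),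
        0 ≤ b (υ t) ∧ ∀ i, k ≤ i → i ≤ r → 0 ≤ hseq f h β i (ξ t, υ t) := by
  choose! v hξ hυ hbv hhr using hode
  have hdiff : ∀ i ≤ r, Differentiable ℝ (hseq f h β i) := fun i hi =>
    (contDiff_hseq (hh.of_le (by exact_mod_cast (by omega : r + 1 ≤ r + 2))) hf
      (by omega : i + 1 ≤ r + 1)).differentiable one_ne_zero
  rintro k hk ⟨hb0, hh0⟩
  have hb_nonneg := nonneg_of_hasDerivWithinAt_add_mul_nonneg (fun t ht =>
    (hb.differentiable two_ne_zero _).hasGradientAt.hasFDerivAt.comp_hasDerivWithinAt t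
      (hυ t ht)) hbv hb0
  have hr_nonneg := nonneg_of_hasDerivWithinAt_add_mul_nonneg (fun t ht =>
    (hdiff r le_rfl _).hasDerivWithinAt_comp_prodMk (hξ t ht) (hυ t ht)) hhr (hh0 r hk le_rfl)
  have hi_nonneg := nonneg_of_hasDerivWithinAt_eq_succ_sub_mul
    (g := fun i t => hseq f h β i (ξ t, υ t)) (fun i hi t ht =>
      hasDerivWithinAt_hseq_comp_of_fderiv_snd_eq_zero (hdiff i hi.le _) (hrel (ξ t, υ t) i hi)
        (hξ t ht) (hυ t ht)) hr_nonneg hh0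
  exact fun t ht => ⟨hb_nonneg t ht, fun i hki hir => hi_nonneg i hki hir t ht⟩

/-- Nested forward invariance (strengthening of Proposition 1): for every `k ∈ {0,…,r}`, the set
`{(x,u) : b(u) ≥ 0, h_i(x,u) ≥ 0 for all k ≤ i ≤ r}` is forward invariant along solutions of the
plant whose control input satisfies the two CBF inequalities. -/
theorem nested_forward_invariance
    {n m r : ℕ} (hn : 0 < n) (hm : 0 < m) (hr : 0 < r)
    (f : EuclideanSpace ℝ (Fin n) × EuclideanSpace ℝ (Fin m) → EuclideanSpace ℝ (Fin n))
    (h : EuclideanSpace ℝ (Fin n) → ℝ) (b : EuclideanSpace ℝ (Fin m) → ℝ)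
    (hf : ContDiff ℝ (r + 1 : ℕ) f) (hh : ContDiff ℝ (r + 2 : ℕ) h) (hb : ContDiff ℝ 2 b)
    (β : ℝ) (hβ : 0 < β)
    (hrel : ∀ (p : EuclideanSpace ℝ (Fin n) × EuclideanSpace ℝ (Fin m)), ∀ i < r,
      fderiv ℝ (fun u => hseq f h β i (p.1, u)) p.2 = 0)
    (α γ : ℝ) (hα : 0 < α) (hγ : 0 < γ)
    (ξ : ℝ → EuclideanSpace ℝ (Fin n)) (υ : ℝ → EuclideanSpace ℝ (Fin m))
    (hode : ∀ t ∈ Ici (0 : ℝ), ∃ v : EuclideanSpace ℝ (Fin m),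
      HasDerivWithinAt ξ (f (ξ t, υ t)) (Ici 0) t ∧
      HasDerivWithinAt υ v (Ici 0) t ∧
      0 ≤ ⟪gradient b (υ t), v⟫ + α * b (υ t) ∧
      0 ≤ fderiv ℝ (fun x => hseq f h β r (x, υ t)) (ξ t) (f (ξ t, υ t))
        + fderiv ℝ (fun u => hseq f h β r (ξ t, u)) (υ t) v + γ * hseq f h β r (ξ t, υ t)) :
    ∀ k ≤ r,
      (0 ≤ b (υ 0) ∧ ∀ i, k ≤ i → i ≤ r → 0 ≤ hseq f h β i (ξ 0, υ 0)) →
      ∀ t ∈ Ici (0 : ℝ),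
        0 ≤ b (υ t) ∧ ∀ i, k ≤ i → i ≤ r → 0 ≤ hseq f h β i (ξ t, υ t) :=
  nested_forward_invariance_general f h b hf hh hb β hrel α γ ξ υ hode
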